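/- Let f: R^n → R be continuously differentiable, pseudoconvex, with a global minimizer, and let {x_k} be generated by the general regularized method (regularized quadratic model with power r ≥ 3, bounded regularization parameters σ_k ∈ [0, σ_max], approximate model stationarity ‖∇m_k(s_k)‖ ≤ τ‖s_k‖min{‖s_k‖,1}, sufficient decrease condition with constant η > 0, and matrices Q_k satisfying Q_k ⪰ aI with a > 2τ and Q_{k+1} ⪯ (1+ψ_k)Q_k for a nonnegative summable sequence {ψ_k}). Then there exists x* ∈ R^n such that the whole sequence {x_k} converges to x*. -/

import Mathlib

open scoped RealInnerProductSpace
open Filter Matrix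

section Aux

lemma inner_toEucLin {n : ℕ} (M : Matrix (Fin n) (Fin n) ℝ) (u v : EuclideanSpace ℝ (Fin n)) :
    ⟪u, Matrix.toEuclideanLin M v⟫ =
      (WithLp.equiv 2 (Fin n → ℝ) u) ⬝ᵥ M.mulVec (WithLp.equiv 2 (Fin n → ℝ) v) := by
  simp [PiLp.inner_apply, Matrix.toEuclideanLin_apply, dotProduct, RCLike.inner_apply, mul_comm]

lemma psd_inner_nonneg {n : ℕ} {M : Matrix (Fin n) (Fin n) ℝ} (hM : M.PosSemidef)
    (v : EuclideanSpace ℝ (Fin n)) : 0 ≤ ⟪v, Matrix.toEuclideanLin M v⟫ := by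
  rw [inner_toEucLin]
  simpa using hM.dotProduct_mulVec_nonneg (WithLp.equiv 2 (Fin n → ℝ) v)

lemma symm_inner {n : ℕ} {M : Matrix (Fin n) (Fin n) ℝ} (hM : M.IsSymm)
    (u v : EuclideanSpace ℝ (Fin n)) :
    ⟪Matrix.toEuclideanLin M u, v⟫ = ⟪u, Matrix.toEuclideanLin M v⟫ := by
  rw [real_inner_comm, inner_toEucLin, inner_toEucLin]
  rw [Matrix.dotProduct_mulVec, ← Matrix.mulVec_transpose, hM.eq, dotProduct_comm,
    Matrix.dotProduct_mulVec, ← Matrix.mulVec_transpose, hM.eq, dotProduct_comm]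

lemma scal_id_inner {n : ℕ} (c : ℝ) (v : EuclideanSpace ℝ (Fin n)) :
    ⟪v, Matrix.toEuclideanLin (c • (1 : Matrix (Fin n) (Fin n) ℝ)) v⟫ = c * ‖v‖ ^ 2 := by
  rw [inner_toEucLin]
  simp [Matrix.smul_mulVec, Matrix.one_mulVec, dotProduct_smul]
  rw [show ((WithLp.ofLp v) ⬝ᵥ (WithLp.ofLp v)) = ⟪v,v⟫ by
    simp only [PiLp.inner_apply, dotProduct, RCLike.inner_apply, conj_trivial]]
  rw [real_inner_self_eq_norm_sq]; left; rfl

lemma prod_one_add_le_exp_tsum (α : ℕ → ℝ) (hα0 : ∀ k, 0 ≤ α k) (hα : Summable α)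
    (k : ℕ) : ∏ j ∈ Finset.range k, (1 + α j) ≤ Real.exp (∑' j, α j) := by
  calc ∏ j ∈ Finset.range k, (1 + α j) ≤ ∏ j ∈ Finset.range k, Real.exp (α j) :=
        Finset.prod_le_prod (fun j _ => by linarith [hα0 j])
          (fun j _ => by linarith [Real.add_one_le_exp (α j)])
    _ = Real.exp (∑ j ∈ Finset.range k, α j) := by rw [Real.exp_sum]
    _ ≤ Real.exp (∑' j, α j) := Real.exp_le_exp.2 (Summable.sum_le_tsum _ (fun j _ => hα0 j) hα)

lemma quasiFejer (u α β : ℕ → ℝ) (hu : ∀ k, 0 ≤ u k) (hα0 : ∀ k, 0 ≤ α k)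
    (hβ0 : ∀ k, 0 ≤ β k) (hα : Summable α) (hβ : Summable β)
    (h : ∀ k, u (k + 1) ≤ (1 + α k) * u k + β k) :
    ∃ l, Tendsto u atTop (nhds l) := by
  set P : ℕ → ℝ := fun k => ∏ j ∈ Finset.range k, (1 + α j) with hPdef
  have hP1 : ∀ k, 1 ≤ P k := by
    intro k
    calc (1:ℝ) = ∏ j ∈ Finset.range k, 1 := by simp
      _ ≤ P k := Finset.prod_le_prod (by intro j _; norm_num) (by intro j _; linarith [hα0 j])
  have hPpos : ∀ k, 0 < P k := fun k => lt_of_lt_of_le one_pos (hP1 k)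
  have hPsucc : ∀ k, P (k + 1) = P k * (1 + α k) := fun k => Finset.prod_range_succ _ _
  have hPmono : Monotone P := monotone_nat_of_le_succ (fun k => by
    rw [hPsucc k]; nlinarith [hPpos k, hα0 k])
  have hPbdd : ∀ k, P k ≤ Real.exp (∑' j, α j) := prod_one_add_le_exp_tsum α hα0 hα
  have hPtend : Tendsto P atTop (nhds (⨆ k, P k)) :=
    tendsto_atTop_ciSup hPmono ⟨Real.exp (∑' j, α j), fun y ⟨k, hk⟩ => hk ▸ hPbdd k⟩
  set w : ℕ → ℝ := fun k => u k / P k with hwdef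
  have hw0 : ∀ k, 0 ≤ w k := fun k => div_nonneg (hu k) (hPpos k).le
  have hwstep : ∀ k, w (k + 1) ≤ w k + β k := by
    intro k
    have hne : (1 + α k) ≠ 0 := ne_of_gt (by linarith [hα0 k])
    have h1 : u (k + 1) / P (k + 1) ≤ ((1 + α k) * u k + β k) / P (k + 1) :=
      div_le_div_of_nonneg_right (h k) (hPpos (k + 1)).le
    have h2 : ((1 + α k) * u k + β k) / P (k + 1) =
        u k / P k + β k / P (k + 1) := by
      rw [add_div, hPsucc k, mul_comm (P k) (1 + α k), mul_div_mul_left _ _ hne]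
    have h3 : β k / P (k + 1) ≤ β k := by
      rw [div_le_iff₀ (hPpos (k+1))]
      nlinarith [hβ0 k, hP1 (k+1)]
    calc w (k + 1) = u (k+1) / P (k+1) := rfl
      _ ≤ _ := h1
      _ = u k / P k + β k / P (k + 1) := h2
      _ ≤ w k + β k := by exact add_le_add le_rfl h3
  set S : ℕ → ℝ := fun k => ∑ j ∈ Finset.range k, β j with hSdef
  have hStend : Tendsto S atTop (nhds (∑' j, β j)) := hβ.hasSum.tendsto_sum_nat
  set t : ℕ → ℝ := fun k => w k - S k with htdef
  have htanti : Antitone t := antitone_nat_of_succ_le (fun k => by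
    have := hwstep k
    have hS : S (k + 1) = S k + β k := Finset.sum_range_succ _ _
    simp only [htdef]
    rw [hS]; linarith)
  have htbdd : BddBelow (Set.range t) := by
    refine ⟨-(∑' j, β j), ?_⟩
    rintro y ⟨k, rfl⟩
    have : S k ≤ ∑' j, β j := Summable.sum_le_tsum _ (fun j _ => hβ0 j) hβ
    have := hw0 k
    simp only [htdef]; linarith
  have httend : Tendsto t atTop (nhds (⨅ k, t k)) := tendsto_atTop_ciInf htanti htbdd
  have hwtend : Tendsto w atTop (nhds ((⨅ k, t k) + ∑' j, β j)) := by
    have : w = fun k => t k + S k := by funext k; simp [htdef]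
    rw [this]
    exact httend.add hStend
  refine ⟨((⨅ k, t k) + ∑' j, β j) * (⨆ k, P k), ?_⟩
  have : u = fun k => w k * P k := by
    funext k; simp only [hwdef]; rw [div_mul_cancel₀ _ (hPpos k).ne']
  rw [this]
  exact hwtend.mul hPtend

end Aux

set_option maxHeartbeats 4000000 in
/-- Full convergence: the whole sequence generated by the general regularized method
converges to some point x*. -/
theorem reg_method_full_convergence {n : ℕ}
    (f : EuclideanSpace ℝ (Fin n) → ℝ) (hf : ContDiff ℝ 1 f)
    (hpseudo : ∀ x y : EuclideanSpace ℝ (Fin n),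
      0 ≤ ⟪gradient f x, y - x⟫ → f x ≤ f y)
    (xmin : EuclideanSpace ℝ (Fin n)) (hmin : ∀ y, f xmin ≤ f y)
    (r τ η σmax a : ℝ) (hr : 3 ≤ r) (hτ : 0 ≤ τ) (hη : 0 < η) (hσmax : 0 ≤ σmax)
    (haτ : 2 * τ < a)
    (x s : ℕ → EuclideanSpace ℝ (Fin n))
    (σ : ℕ → ℝ) (hσ : ∀ k, σ k ∈ Set.Icc (0 : ℝ) σmax)
    (Q : ℕ → Matrix (Fin n) (Fin n) ℝ)
    (hsymm : ∀ k, (Q k).IsSymm)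
    (hQa : ∀ k, (Q k - a • 1).PosSemidef)
    (ψ : ℕ → ℝ) (hψ0 : ∀ k, 0 ≤ ψ k) (hψ : Summable ψ)
    (hQrel : ∀ k : ℕ, ((1 + ψ k) • Q k - Q (k + 1)).PosSemidef)
    (m : ℕ → EuclideanSpace ℝ (Fin n) → ℝ)
    (hm : ∀ k t, m k t = f (x k) + ⟪gradient f (x k), t⟫ +
      (1 / 2) * ⟪t, Matrix.toEuclideanLin (Q k) t⟫ + (σ k / r) * ‖t‖ ^ r)
    (hgrad : ∀ k : ℕ,
      ‖gradient f (x k) + Matrix.toEuclideanLin (Q k) (s k) +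
          (σ k * ‖s k‖ ^ (r - 2)) • s k‖ ≤ τ * ‖s k‖ * min ‖s k‖ 1)
    (hupdate : ∀ k : ℕ, x (k + 1) = x k + s k ∨ x (k + 1) = x k)
    (hdecr : ∀ k : ℕ, x (k + 1) ≠ x k →
      η * (m k 0 - m k (s k)) ≤ f (x k) - f (x (k + 1)) ∧ 0 < m k 0 - m k (s k)) :
    ∃ xstar : EuclideanSpace ℝ (Fin n),
      Filter.Tendsto x Filter.atTop (nhds xstar) := by
  set B : ℕ → (EuclideanSpace ℝ (Fin n)) →ₗ[ℝ] (EuclideanSpace ℝ (Fin n)) :=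
    fun k => Matrix.toEuclideanLin (Q k) with hBdef
  have ha0 : 0 < a := lt_of_le_of_lt (by linarith) haτ
  -- lower bound on quadratic form
  have hBlow : ∀ k (v : EuclideanSpace ℝ (Fin n)), a * ‖v‖ ^ 2 ≤ ⟪v, B k v⟫ := by
    intro k v
    have h0 := psd_inner_nonneg (hQa k) v
    rw [map_sub] at h0
    rw [LinearMap.sub_apply, inner_sub_right, scal_id_inner] at h0
    linarith
  have hBnn : ∀ k (v : EuclideanSpace ℝ (Fin n)), 0 ≤ ⟪v, B k v⟫ := fun k v =>
    le_trans (by positivity) (hBlow k v)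
  have hBsymm : ∀ k (u v : EuclideanSpace ℝ (Fin n)), ⟪B k u, v⟫ = ⟪u, B k v⟫ := fun k => symm_inner (hsymm k)
  have hBrel : ∀ k (v : EuclideanSpace ℝ (Fin n)), ⟪v, B (k+1) v⟫ ≤ (1 + ψ k) * ⟪v, B k v⟫ := by
    intro k v
    have h0 := psd_inner_nonneg (hQrel k) v
    rw [map_sub, _root_.map_smul] at h0
    rw [LinearMap.sub_apply, inner_sub_right, LinearMap.smul_apply, inner_smul_right] at h0
    linarith
  -- uniform upper bound on quadratic forms
  obtain ⟨C, hC0, hBup⟩ : ∃ C : ℝ, 0 ≤ C ∧ ∀ k (v : EuclideanSpace ℝ (Fin n)), ⟪v, B k v⟫ ≤ C * ‖v‖ ^ 2 := by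
    set T0 := LinearMap.toContinuousLinearMap (B 0) with hT0def
    refine ⟨Real.exp (∑' j, ψ j) * ‖T0‖, by positivity, ?_⟩
    have hstep : ∀ k (v : EuclideanSpace ℝ (Fin n)),
        ⟪v, B k v⟫ ≤ (∏ j ∈ Finset.range k, (1 + ψ j)) * ⟪v, B 0 v⟫ := by
      intro k
      induction k with
      | zero => intro v; simp
      | succ k ih =>
        intro v
        have h1 := hBrel k v
        have h2 := ih v
        have hψk := hψ0 k
        rw [Finset.prod_range_succ]
        calc ⟪v, B (k+1) v⟫ ≤ (1 + ψ k) * ⟪v, B k v⟫ := h1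
          _ ≤ (1 + ψ k) * ((∏ j ∈ Finset.range k, (1 + ψ j)) * ⟪v, B 0 v⟫) :=
              mul_le_mul_of_nonneg_left h2 (by linarith)
          _ = (∏ j ∈ Finset.range k, (1 + ψ j)) * (1 + ψ k) * ⟪v, B 0 v⟫ := by ring
    intro k v
    have hprod := prod_one_add_le_exp_tsum ψ hψ0 hψ k
    have h0nn : 0 ≤ ⟪v, B 0 v⟫ := hBnn 0 v
    have hT : ⟪v, B 0 v⟫ ≤ ‖T0‖ * ‖v‖ ^ 2 := by
      have h1 : ⟪v, B 0 v⟫ ≤ ‖v‖ * ‖(B 0) v‖ := real_inner_le_norm _ _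
      have h2 : ‖(B 0) v‖ = ‖T0 v‖ := rfl
      have h3 : ‖T0 v‖ ≤ ‖T0‖ * ‖v‖ := T0.le_opNorm v
      nlinarith [norm_nonneg v, norm_nonneg (T0 v)]
    calc ⟪v, B k v⟫ ≤ (∏ j ∈ Finset.range k, (1 + ψ j)) * ⟪v, B 0 v⟫ := hstep k v
      _ ≤ Real.exp (∑' j, ψ j) * ⟪v, B 0 v⟫ := mul_le_mul_of_nonneg_right hprod h0nn
      _ ≤ Real.exp (∑' j, ψ j) * (‖T0‖ * ‖v‖ ^ 2) :=
          mul_le_mul_of_nonneg_left hT (Real.exp_pos _).le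
      _ = Real.exp (∑' j, ψ j) * ‖T0‖ * ‖v‖ ^ 2 := by ring
  have hgradB : ∀ k, ‖gradient f (x k) + B k (s k) + (σ k * ‖s k‖ ^ (r - 2)) • s k‖ ≤
      τ * ‖s k‖ * min ‖s k‖ 1 := hgrad
  have hmB : ∀ k t, m k t = f (x k) + ⟪gradient f (x k), t⟫ +
      (1 / 2) * ⟪t, B k t⟫ + (σ k / r) * ‖t‖ ^ r := hm
  clear_value B
  -- the step vectors
  set d : ℕ → EuclideanSpace ℝ (Fin n) := fun k => x (k + 1) - x k with hddef
  have hxd : ∀ k, x (k + 1) = x k + d k := fun k => by simp [hddef]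
  have hdisj : ∀ k, d k = 0 ∨ (d k = s k ∧ x (k + 1) ≠ x k) := by
    intro k
    by_cases hk : x (k + 1) = x k
    · left; simp [hddef, hk]
    · right
      rcases hupdate k with h | h
      · exact ⟨by simp [hddef, h], hk⟩
      · exact absurd h hk
  -- model decrease lower bound
  have hmodel : ∀ k, x (k + 1) ≠ x k → (a / 2 - τ) * ‖s k‖ ^ 2 ≤ m k 0 - m k (s k) := by
    intro k _
    set g : EuclideanSpace ℝ (Fin n) := gradient f (x k) with hgdef
    set N : ℝ := ‖s k‖ with hNdef
    have hN0 : 0 ≤ N := norm_nonneg _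
    set e : EuclideanSpace ℝ (Fin n) := g + B k (s k) + (σ k * N ^ (r - 2)) • s k with hedef
    have hek : ‖e‖ ≤ τ * N * min N 1 := hgradB k
    have hm0 : m k 0 = f (x k) := by
      have hz : (0:ℝ) ^ r = 0 := Real.zero_rpow (by linarith)
      rw [hmB k 0]
      simp [hz]
    have hpow : N ^ (r - 2) * N ^ 2 = N ^ r := by
      rcases eq_or_lt_of_le hN0 with h | h
      · rw [← h, Real.zero_rpow (by linarith : r - 2 ≠ 0),
          Real.zero_rpow (by linarith : r ≠ 0)]
        ring
      · rw [← Real.rpow_natCast N 2, ← Real.rpow_add h]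
        norm_num
    have hinner : ⟪e, s k⟫ = ⟪g, s k⟫ + ⟪s k, B k (s k)⟫ + σ k * (N ^ (r - 2) * N ^ 2) := by
      rw [hedef, inner_add_left, inner_add_left, real_inner_smul_left, hBsymm,
        real_inner_self_eq_norm_sq]
      ring
    have hexp : m k 0 - m k (s k) =
        -⟪g, s k⟫ - (1/2) * ⟪s k, B k (s k)⟫ - (σ k / r) * N ^ r := by
      rw [hm0, hmB k (s k)]
      ring
    have hQs : a * N ^ 2 ≤ ⟪s k, B k (s k)⟫ := hBlow k (s k)
    have hes : ⟪e, s k⟫ ≤ τ * N ^ 2 := by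
      have h1 : ⟪e, s k⟫ ≤ ‖e‖ * N := real_inner_le_norm e (s k)
      have h2 : min N 1 ≤ 1 := min_le_right _ _
      have h4 : ‖e‖ * N ≤ (τ * N * min N 1) * N := mul_le_mul_of_nonneg_right hek hN0
      have h5 : 0 ≤ τ * N * N * (1 - min N 1) :=
        mul_nonneg (mul_nonneg (mul_nonneg hτ hN0) hN0) (by linarith)
      nlinarith [h1, h4, h5]
    have hσ0 : 0 ≤ σ k := (hσ k).1
    have hNr0 : 0 ≤ N ^ r := Real.rpow_nonneg hN0 r
    have h1r : 1 / r ≤ 1 := by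
      rw [div_le_one (by linarith : (0:ℝ) < r)]; linarith
    have hσterm : (σ k / r) * N ^ r ≤ σ k * N ^ r := by
      have : σ k / r ≤ σ k := by
        calc σ k / r = σ k * (1/r) := by ring
          _ ≤ σ k * 1 := by
              apply mul_le_mul_of_nonneg_left h1r hσ0
          _ = σ k := mul_one _
      exact mul_le_mul_of_nonneg_right this hNr0
    -- from hinner : ⟪g, s k⟫ = ⟪e, s k⟫ - ⟪s k, B k (s k)⟫ - σ k * N ^ r
    have hgs : ⟪g, s k⟫ = ⟪e, s k⟫ - ⟪s k, B k (s k)⟫ - σ k * N ^ r := by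
      rw [← hpow]; linarith [hinner]
    rw [hexp, hgs]
    linarith [hQs, hes, hσterm]
  set c : ℝ := η * (a / 2 - τ) with hcdef
  have hc0 : 0 < c := by
    apply mul_pos hη; linarith
  have hdecr2 : ∀ k, c * ‖d k‖ ^ 2 ≤ f (x k) - f (x (k + 1)) := by
    intro k
    rcases hdisj k with h | ⟨hds, hne⟩
    · rw [h]
      have : x (k+1) = x k := by have := hxd k; rw [h] at this; simpa using this
      simp [this]
    · obtain ⟨h1, _⟩ := hdecr k hne
      have h2 := hmodel k hne
      rw [hds]
      calc c * ‖s k‖ ^ 2 = η * ((a/2 - τ) * ‖s k‖ ^ 2) := by ring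
        _ ≤ η * (m k 0 - m k (s k)) := by
            apply mul_le_mul_of_nonneg_left h2 hη.le
        _ ≤ _ := h1
  have hanti : Antitone (fun k => f (x k)) := antitone_nat_of_succ_le (fun k => by
    have := hdecr2 k; nlinarith [sq_nonneg ‖d k‖])
  have hbddb : BddBelow (Set.range fun k => f (x k)) :=
    ⟨f xmin, by rintro y ⟨k, rfl⟩; exact hmin _⟩
  set L : ℝ := ⨅ k, f (x k) with hLdef
  have hLtend : Tendsto (fun k => f (x k)) atTop (nhds L) := tendsto_atTop_ciInf hanti hbddb
  have hLle : ∀ k, L ≤ f (x k) := fun k => ciInf_le hbddb k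
  have hminL : f xmin ≤ L := le_ciInf (fun k => hmin _)
  -- summability of squared steps
  have hsum : Summable (fun k => ‖d k‖ ^ 2) := by
    apply summable_of_sum_range_le (c := (f (x 0) - f xmin) / c) (fun k => sq_nonneg _)
    intro N
    rw [le_div_iff₀ hc0, Finset.sum_mul]
    have : ∀ j ∈ Finset.range N, ‖d j‖ ^ 2 * c ≤ f (x j) - f (x (j+1)) := by
      intro j _; rw [mul_comm]; exact hdecr2 j
    calc ∑ j ∈ Finset.range N, ‖d j‖ ^ 2 * c
        ≤ ∑ j ∈ Finset.range N, (f (x j) - f (x (j+1))) := Finset.sum_le_sum this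
      _ = f (x 0) - f (x N) := Finset.sum_range_sub' (fun j => f (x j)) N
      _ ≤ f (x 0) - f xmin := by linarith [hmin (x N)]
  -- uniform bound on step norms
  have hdbd : ∀ k, ‖d k‖ ^ 2 ≤ (f (x 0) - f xmin) / c := by
    intro k
    rw [le_div_iff₀ hc0, mul_comm]
    calc c * ‖d k‖ ^ 2 ≤ f (x k) - f (x (k+1)) := hdecr2 k
      _ ≤ f (x 0) - f xmin := by
          have h1 : f (x k) ≤ f (x 0) := hanti (Nat.zero_le k)
          have h2 : f xmin ≤ f (x (k+1)) := hmin _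
          linarith
  set D1 : ℝ := max (Real.sqrt ((f (x 0) - f xmin) / c)) 1 with hD1def
  have hD11 : 1 ≤ D1 := le_max_right _ _
  have hdD1 : ∀ k, ‖d k‖ ≤ D1 := by
    intro k
    have h1 : ‖d k‖ ≤ Real.sqrt ((f (x 0) - f xmin) / c) := by
      rw [show ‖d k‖ = Real.sqrt (‖d k‖ ^ 2) by rw [Real.sqrt_sq (norm_nonneg _)]]
      exact Real.sqrt_le_sqrt (hdbd k)
    exact le_trans h1 (le_max_left _ _)
  clear_value d D1
  -- case split : finitely many successful steps
  by_cases hcase : ∃ K, ∀ k, K ≤ k → x (k + 1) = x k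
  · obtain ⟨K, hK⟩ := hcase
    refine ⟨x K, tendsto_atTop_of_eventually_const (i₀ := K) ?_⟩
    intro k hk
    induction k, hk using Nat.le_induction with
    | base => rfl
    | succ k hk ih => rw [hK k hk, ih]
  · push_neg at hcase
    have hinf : ∀ K, ∃ k, K ≤ k ∧ x (k + 1) ≠ x k := by
      intro K
      obtain ⟨k, hk1, hk2⟩ := hcase K
      exact ⟨k, hk1, hk2⟩
    have hfgt : ∀ k, L < f (x k) := by
      intro k
      obtain ⟨j, hj1, hj2⟩ := hinf k
      obtain ⟨h1, h2⟩ := hdecr j hj2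
      have h3 : 0 < f (x j) - f (x (j + 1)) := lt_of_lt_of_le (mul_pos hη h2) h1
      have h4 : f (x j) ≤ f (x k) := hanti hj1
      have h5 : L ≤ f (x (j + 1)) := hLle _
      linarith
    -- the quasi-Fejér property wrt any point of the limiting sublevel set
    have hSψ0 : 0 ≤ ∑' j, ψ j := tsum_nonneg hψ0
    have hψle : ∀ k, ψ k ≤ ∑' j, ψ j := fun k => Summable.le_tsum hψ k (fun j _ => hψ0 j)
    have hD10 : (0:ℝ) < D1 := lt_of_lt_of_le one_pos hD11
    have hDr0 : 0 ≤ D1 ^ (r - 3) := Real.rpow_nonneg hD10.le _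
    set Kc : ℝ := 2 * (τ + σmax * D1 ^ (r - 3)) with hKcdef
    have hKc0 : 0 ≤ Kc := by positivity
    set Sψ : ℝ := ∑' j, ψ j with hSψdef
    set α : ℕ → ℝ := fun k => ψ k + ((1 + Sψ) * Kc / a) * ‖d k‖ ^ 2 with hαdef
    set β : ℕ → ℝ := fun k => ((1 + Sψ) * (Kc + C)) * ‖d k‖ ^ 2 with hβdef
    have hα0 : ∀ k, 0 ≤ α k := by
      intro k
      have := hψ0 k
      have h1 : 0 ≤ ((1 + Sψ) * Kc / a) * ‖d k‖ ^ 2 := by positivity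
      simp only [hαdef]; linarith
    have hβ0 : ∀ k, 0 ≤ β k := fun k => by positivity
    have hαs : Summable α := hψ.add (hsum.mul_left _)
    have hβs : Summable β := hsum.mul_left _
    clear_value Kc Sψ α β
    -- the auxiliary power bound
    have hpow2 : ∀ N : ℝ, 0 ≤ N → N ≤ D1 → N ^ (r - 2) * N ≤ D1 ^ (r - 3) * N ^ 2 := by
      intro N hN hND
      rcases eq_or_lt_of_le hN with h | h
      · rw [← h, Real.zero_rpow (by linarith : r - 2 ≠ 0)]
        norm_num
      · have h1 : N ^ (r - 2) = N ^ (r - 3) * N := by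
          rw [show r - 2 = (r - 3) + 1 by ring, Real.rpow_add h, Real.rpow_one]
        have h2 : N ^ (r - 3) ≤ D1 ^ (r - 3) :=
          Real.rpow_le_rpow hN hND (by linarith)
        rw [h1]
        nlinarith [h2, sq_nonneg N, h.le]
    have hFejer : ∀ z : EuclideanSpace ℝ (Fin n), f z ≤ L →
        ∃ l, Tendsto (fun k => ⟪x k - z, B k (x k - z)⟫) atTop (nhds l) := by
      intro z hz
      refine quasiFejer (fun k => ⟪x k - z, B k (x k - z)⟫) α β
        (fun k => hBnn _ _) hα0 hβ0 hαs hβs ?_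
      intro k
      have hu0 : 0 ≤ ⟪x k - z, B k (x k - z)⟫ := hBnn _ _
      have ht0 : (0:ℝ) ≤ ‖d k‖ ^ 2 := sq_nonneg _
      show ⟪x (k+1) - z, B (k+1) (x (k+1) - z)⟫ ≤
        (1 + α k) * ⟪x k - z, B k (x k - z)⟫ + β k
      rcases hdisj k with h0 | ⟨hds, hne⟩
      · -- unsuccessful step
        have hx1 : x (k + 1) = x k := by
          have := hxd k; rw [h0, add_zero] at this; exact this
        rw [hx1]
        calc ⟪x k - z, B (k+1) (x k - z)⟫ ≤ (1 + ψ k) * ⟪x k - z, B k (x k - z)⟫ :=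
              hBrel k _
          _ ≤ (1 + α k) * ⟪x k - z, B k (x k - z)⟫ + β k := by
              have hαψ : ψ k ≤ α k := by
                have h1 : 0 ≤ ((1 + Sψ) * Kc / a) * ‖d k‖ ^ 2 := by positivity
                simp only [hαdef]; linarith
              have hβk : 0 ≤ β k := hβ0 k
              nlinarith [hu0]
      · -- successful step
        set w : EuclideanSpace ℝ (Fin n) := x k - z with hwdef
        set g : EuclideanSpace ℝ (Fin n) := gradient f (x k) with hgdef
        set N : ℝ := ‖s k‖ with hNdef
        have hN0 : 0 ≤ N := norm_nonneg _
        have hNd : N = ‖d k‖ := by rw [hNdef, hds]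
        have hND1 : N ≤ D1 := by rw [hNd]; exact hdD1 k
        set e : EuclideanSpace ℝ (Fin n) := g + B k (s k) + (σ k * N ^ (r - 2)) • s k
          with hedef
        have hek : ‖e‖ ≤ τ * N * min N 1 := hgradB k
        have hgz : 0 ≤ ⟪g, w⟫ := by
          by_contra hcon
          push_neg at hcon
          have h1 : 0 ≤ ⟪g, z - x k⟫ := by
            rw [show z - x k = -w by rw [hwdef]; abel, inner_neg_right]
            linarith
          have h2 := hpseudo (x k) z h1
          linarith [hfgt k, hz]
        have hBs : B k (s k) = e - g - (σ k * N ^ (r - 2)) • s k := by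
          rw [hedef]; abel
        have hX : ⟪B k (s k), w⟫ =
            ⟪e, w⟫ - ⟪g, w⟫ - (σ k * N ^ (r - 2)) * ⟪s k, w⟫ := by
          rw [hBs, inner_sub_left, inner_sub_left, real_inner_smul_left]
        have hew : ⟪e, w⟫ ≤ (τ * N ^ 2) * ‖w‖ := by
          have h1 : ⟪e, w⟫ ≤ ‖e‖ * ‖w‖ := real_inner_le_norm e w
          have h2 : min N 1 ≤ N := min_le_left _ _
          have h3 : ‖e‖ ≤ τ * N ^ 2 := by nlinarith [mul_nonneg hτ hN0]
          nlinarith [norm_nonneg w, norm_nonneg e]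
        have hsw : -(σ k * N ^ (r - 2)) * ⟪s k, w⟫ ≤ (σmax * (D1 ^ (r-3) * N ^ 2)) * ‖w‖ := by
          have h1 : |⟪s k, w⟫| ≤ N * ‖w‖ := abs_real_inner_le_norm _ _
          have h2 : -⟪s k, w⟫ ≤ N * ‖w‖ := by
            have := abs_le.1 h1
            linarith [this.1]
          have h3 : 0 ≤ σ k * N ^ (r - 2) :=
            mul_nonneg (hσ k).1 (Real.rpow_nonneg hN0 _)
          have h4 : -(σ k * N ^ (r - 2)) * ⟪s k, w⟫ ≤ (σ k * N ^ (r - 2)) * (N * ‖w‖) := by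
            calc -(σ k * N ^ (r - 2)) * ⟪s k, w⟫
                = (σ k * N ^ (r - 2)) * (-⟪s k, w⟫) := by ring
              _ ≤ (σ k * N ^ (r - 2)) * (N * ‖w‖) := mul_le_mul_of_nonneg_left h2 h3
          have h5 : N ^ (r - 2) * N ≤ D1 ^ (r - 3) * N ^ 2 := hpow2 N hN0 hND1
          have h6 : σ k ≤ σmax := (hσ k).2
          have h7 : 0 ≤ N ^ (r - 2) * N := mul_nonneg (Real.rpow_nonneg hN0 _) hN0
          have h8 : (σ k * N ^ (r - 2)) * (N * ‖w‖) ≤ (σmax * (D1 ^ (r-3) * N ^ 2)) * ‖w‖ := by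
            have h9 : σ k * (N ^ (r - 2) * N) ≤ σmax * (D1 ^ (r-3) * N ^ 2) := by
              apply mul_le_mul h6 h5 h7 hσmax
            calc (σ k * N ^ (r - 2)) * (N * ‖w‖) = (σ k * (N ^ (r - 2) * N)) * ‖w‖ := by ring
              _ ≤ _ := mul_le_mul_of_nonneg_right h9 (norm_nonneg w)
          linarith
        have hXb : ⟪B k (s k), w⟫ ≤ (Kc / 2) * ‖d k‖ ^ 2 * ‖w‖ := by
          rw [hX]
          have : (Kc / 2) * ‖d k‖ ^ 2 = (τ + σmax * D1 ^ (r - 3)) * N ^ 2 := by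
            rw [hKcdef, hNd]; ring
          rw [this]
          nlinarith [hew, hsw, hgz]
        have hwb : ‖w‖ ≤ 1 + ⟪x k - z, B k (x k - z)⟫ / a := by
          have h1 : a * ‖w‖ ^ 2 ≤ ⟪x k - z, B k (x k - z)⟫ := hBlow k w
          have h2 : ‖w‖ ^ 2 ≤ ⟪x k - z, B k (x k - z)⟫ / a := by
            rw [le_div_iff₀ ha0, mul_comm]; exact h1
          nlinarith [norm_nonneg w, sq_nonneg (‖w‖ - 1)]
        have hss : ⟪s k, B k (s k)⟫ ≤ C * ‖d k‖ ^ 2 := by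
          rw [hds]
          exact hBup k (s k)
        have hw1 : x (k + 1) - z = w + s k := by
          rw [hxd k, hds, hwdef]; abel
        have hexp2 : ⟪w + s k, B k (w + s k)⟫ =
            ⟪x k - z, B k (x k - z)⟫ + 2 * ⟪B k (s k), w⟫ + ⟪s k, B k (s k)⟫ := by
          rw [map_add, inner_add_left, inner_add_right, inner_add_right]
          have e1 : ⟪w, B k (s k)⟫ = ⟪B k (s k), w⟫ := real_inner_comm _ _
          have e2 : ⟪s k, B k w⟫ = ⟪B k (s k), w⟫ := (hBsymm k (s k) w).symm
          rw [e1, e2]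
          ring
        set u0 : ℝ := ⟪x k - z, B k (x k - z)⟫ with hu0def
        clear_value w g N e u0
        have hmid : ⟪x (k+1) - z, B k (x (k+1) - z)⟫ ≤
            (1 + (Kc / a) * ‖d k‖ ^ 2) * u0 + (Kc * ‖d k‖ ^ 2 + C * ‖d k‖ ^ 2) := by
          rw [hw1, hexp2]
          have hXb2 : 2 * ⟪B k (s k), w⟫ ≤ Kc * ‖d k‖ ^ 2 * (1 + u0 / a) := by
            have h1 : ⟪B k (s k), w⟫ ≤ (Kc / 2) * ‖d k‖ ^ 2 * (1 + u0 / a) := by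
              calc ⟪B k (s k), w⟫ ≤ (Kc / 2) * ‖d k‖ ^ 2 * ‖w‖ := hXb
                _ ≤ (Kc / 2) * ‖d k‖ ^ 2 * (1 + u0 / a) := by
                    apply mul_le_mul_of_nonneg_left hwb
                      (mul_nonneg (div_nonneg hKc0 (by norm_num)) ht0)
            linarith
          have expand : Kc * ‖d k‖ ^ 2 * (1 + u0 / a) =
              (Kc / a) * ‖d k‖ ^ 2 * u0 + Kc * ‖d k‖ ^ 2 := by
            ring
          linarith [hss, hXb2, expand]
        have hfinal : ⟪x (k+1) - z, B (k+1) (x (k+1) - z)⟫ ≤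
            (1 + ψ k) * ((1 + (Kc / a) * ‖d k‖ ^ 2) * u0 + (Kc * ‖d k‖ ^ 2 + C * ‖d k‖ ^ 2)) := by
          calc ⟪x (k+1) - z, B (k+1) (x (k+1) - z)⟫
              ≤ (1 + ψ k) * ⟪x (k+1) - z, B k (x (k+1) - z)⟫ := hBrel k _
            _ ≤ _ := mul_le_mul_of_nonneg_left hmid (by linarith [hψ0 k])
        -- final comparison
        have hψk := hψ0 k
        have hψS := hψle k
        have hCd : 0 ≤ C * ‖d k‖ ^ 2 := mul_nonneg hC0 ht0
        have hKd : 0 ≤ Kc * ‖d k‖ ^ 2 := mul_nonneg hKc0 ht0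
        have hKda : 0 ≤ (Kc / a) * ‖d k‖ ^ 2 := mul_nonneg (div_nonneg hKc0 ha0.le) ht0
        have hcmp : (1 + ψ k) * ((1 + (Kc / a) * ‖d k‖ ^ 2) * u0 +
            (Kc * ‖d k‖ ^ 2 + C * ‖d k‖ ^ 2)) ≤ (1 + α k) * u0 + β k := by
          simp only [hαdef, hβdef]
          have h1 : (1 + ψ k) * (1 + (Kc / a) * ‖d k‖ ^ 2) ≤
              1 + (ψ k + ((1 + Sψ) * Kc / a) * ‖d k‖ ^ 2) := by
            have expand : (1 + ψ k) * (1 + (Kc / a) * ‖d k‖ ^ 2) =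
                1 + ψ k + (Kc / a) * ‖d k‖ ^ 2 + ψ k * ((Kc / a) * ‖d k‖ ^ 2) := by ring
            have e2 : ((1 + Sψ) * Kc / a) * ‖d k‖ ^ 2 =
                (Kc / a) * ‖d k‖ ^ 2 + Sψ * ((Kc / a) * ‖d k‖ ^ 2) := by ring
            rw [expand, e2]
            nlinarith [mul_le_mul_of_nonneg_right hψS hKda]
          have h2 : (1 + ψ k) * (Kc * ‖d k‖ ^ 2 + C * ‖d k‖ ^ 2) ≤
              ((1 + Sψ) * (Kc + C)) * ‖d k‖ ^ 2 := by
            have e3 : ((1 + Sψ) * (Kc + C)) * ‖d k‖ ^ 2 =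
                (1 + Sψ) * (Kc * ‖d k‖ ^ 2 + C * ‖d k‖ ^ 2) := by ring
            rw [e3]
            apply mul_le_mul_of_nonneg_right (by linarith) (by linarith)
          nlinarith [mul_le_mul_of_nonneg_right h1 hu0, hu0, h2]
        exact le_trans hfinal hcmp
    -- boundedness via z = xmin
    obtain ⟨l0, hl0⟩ := hFejer xmin hminL
    have hbdd : ∃ R : ℝ, ∀ k, ‖x k - xmin‖ ≤ R := by
      obtain ⟨R0, hR0⟩ := hl0.bddAbove_range
      refine ⟨Real.sqrt (R0 / a), ?_⟩
      intro k
      have h1 : ⟪x k - xmin, B k (x k - xmin)⟫ ≤ R0 := hR0 ⟨k, rfl⟩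
      have h2 : a * ‖x k - xmin‖ ^ 2 ≤ R0 := le_trans (hBlow k _) h1
      have h3 : ‖x k - xmin‖ ^ 2 ≤ R0 / a := by rw [le_div_iff₀ ha0, mul_comm]; exact h2
      rw [show ‖x k - xmin‖ = Real.sqrt (‖x k - xmin‖ ^ 2) by
        rw [Real.sqrt_sq (norm_nonneg _)]]
      exact Real.sqrt_le_sqrt h3
    obtain ⟨R, hR⟩ := hbdd
    -- extract convergent subsequence
    obtain ⟨xstar, -, φ, hφ, hxφ⟩ :=
      tendsto_subseq_of_bounded (Metric.isBounded_closedBall (x := xmin) (r := R))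
        (fun k => by simpa [Metric.mem_closedBall, dist_eq_norm] using hR k)
    have hfxstar : f xstar = L := by
      have h1 : Tendsto (fun j => f (x (φ j))) atTop (nhds (f xstar)) :=
        (hf.continuous.tendsto xstar).comp hxφ
      have h2 : Tendsto (fun j => f (x (φ j))) atTop (nhds L) :=
        hLtend.comp hφ.tendsto_atTop
      exact tendsto_nhds_unique h1 h2
    obtain ⟨l, hl⟩ := hFejer xstar (le_of_eq hfxstar)
    -- subsequence of u tends to 0, hence l = 0
    have hl0' : l = 0 := by
      have hsub : Tendsto (fun j => ⟪x (φ j) - xstar, B (φ j) (x (φ j) - xstar)⟫)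
          atTop (nhds l) := hl.comp hφ.tendsto_atTop
      have hnorm : Tendsto (fun j => C * ‖x (φ j) - xstar‖ ^ 2) atTop (nhds 0) := by
        have h1 : Tendsto (fun j => x (φ j) - xstar) atTop (nhds 0) := by
          simpa using hxφ.sub_const xstar
        have h2 : Tendsto (fun j => ‖x (φ j) - xstar‖) atTop (nhds 0) := by
          simpa using h1.norm
        have h3 : Tendsto (fun j => ‖x (φ j) - xstar‖ ^ 2) atTop (nhds 0) := by
          simpa using h2.pow 2
        simpa using h3.const_mul C
      have hsq : Tendsto (fun j => ⟪x (φ j) - xstar, B (φ j) (x (φ j) - xstar)⟫)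
          atTop (nhds 0) :=
        squeeze_zero (fun j => hBnn _ _) (fun j => hBup _ _) hnorm
      exact tendsto_nhds_unique hsub hsq
    rw [hl0'] at hl
    -- conclude
    refine ⟨xstar, ?_⟩
    rw [tendsto_iff_dist_tendsto_zero]
    have hsq2 : Tendsto (fun k => ‖x k - xstar‖ ^ 2) atTop (nhds 0) := by
      apply squeeze_zero (fun k => sq_nonneg _) (g := fun k => ⟪x k - xstar, B k (x k - xstar)⟫ / a)
      · intro k
        rw [le_div_iff₀ ha0, mul_comm]
        exact hBlow k _
      · simpa using hl.div_const a
    have : Tendsto (fun k => ‖x k - xstar‖) atTop (nhds 0) := by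
      have := hsq2.sqrt
      simpa [Real.sqrt_sq (norm_nonneg _)] using this
    simpa [dist_eq_norm] using this
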